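/- Let M > 0 and suppose k, h : ℝ → ℝ are Lipschitz on [-M, M] with Lipschitz constants L_k, L_h. Then there exists a constant C > 0, depending only on M, L_k, L_h, sup_{|s|≤M}|k(s)|, sup_{|s|≤M}|h(s)| and δ, such that for all measurable functions θ_1, θ_2 : [-1,1] → [-M, M] one has ‖L(θ_1) − L(θ_2)‖_{L^2_w} ≤ C ‖θ_1 − θ_2‖_{L^2_w} (Lipschitz continuity of the peridynamic operator on uniformly bounded sets). -/

import Mathlib

open MeasureTheory Real Set Filter

noncomputable section

/-- The distributed influence function `φ_δ`. -/
def phiDelta (δ z : ℝ) : ℝ := if 1 - δ ≤ |z| then (|z| - 1 + δ) / δ else 0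

/-- `φ̄_δ(z) = φ_δ(z)/|z|`. -/
def phiBar (δ z : ℝ) : ℝ := phiDelta δ z / |z|

/-- The Chebyshev weight `w(z) = (1-z²)^{-1/2}`. -/
def chebW (z : ℝ) : ℝ := (Real.sqrt (1 - z ^ 2))⁻¹

/-- The `k`-th Chebyshev polynomial of the first kind, `T_k(z) = cos (k arccos z)`. -/
def chebT (k : ℕ) (z : ℝ) : ℝ := Real.cos (k * Real.arccos z)

/-- The weighted `L²_w` norm on `(-1,1)`. -/
def L2wNorm (u : ℝ → ℝ) : ℝ := (∫ z in Ioo (-1 : ℝ) 1, u z ^ 2 * chebW z) ^ (1/2 : ℝ)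

/-- The weighted `L^q_w` norm on `(-1,1)`. -/
def LqwNorm (q : ℝ) (u : ℝ → ℝ) : ℝ := (∫ z in Ioo (-1 : ℝ) 1, |u z| ^ q * chebW z) ^ (1/q)

/-- The weighted inner product `(u,v)_w`. -/
def innerW (u v : ℝ → ℝ) : ℝ := ∫ z in Ioo (-1 : ℝ) 1, u z * v z * chebW z

/-- Membership in `L²_w([-1,1])`. -/
def MemL2w (u : ℝ → ℝ) : Prop :=
  Measurable u ∧ IntegrableOn (fun z => u z ^ 2 * chebW z) (Ioo (-1 : ℝ) 1)

/-- The peridynamic operator `L(θ)`. -/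
def periL (δ : ℝ) (k h θ : ℝ → ℝ) (z : ℝ) : ℝ :=
  ∫ z' in Ioo (-1 : ℝ) 1,
    phiBar δ (z' - z) * ((k (θ z) + k (θ z')) / 2) * ((h (θ z') + z') - (h (θ z) + z))

/-- The continuous Chebyshev normalization constants. -/
def gammaC (k : ℕ) : ℝ := if k = 0 then π else π / 2

/-- The `k`-th Chebyshev coefficient of `u`. -/
def chebCoeff (u : ℝ → ℝ) (k : ℕ) : ℝ := innerW u (chebT k) / gammaC k

/-- The orthogonal projection onto `S_N = span {T_0, …, T_N}`. -/
def PN (N : ℕ) (u : ℝ → ℝ) : ℝ → ℝ :=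
  fun z => ∑ k ∈ Finset.range (N + 1), chebCoeff u k * chebT k z

/-- The space `S_N = span {T_0, …, T_N}`. -/
def SN (N : ℕ) : Set (ℝ → ℝ) :=
  {u | ∃ c : ℕ → ℝ, ∀ z, u z = ∑ k ∈ Finset.range (N + 1), c k * chebT k z}

/-- The squared `H^s_w` norm, `‖u‖² = ∑_{k≤s} ‖u^{(k)}‖²_{L²_w}`. -/
def HswNormSq (s : ℕ) (u : ℝ → ℝ) : ℝ :=
  ∑ k ∈ Finset.range (s + 1), L2wNorm (iteratedDeriv k u) ^ 2

/-- The piecewise linear time interpolant of `(θ_n)`: for `t ∈ (t_{n-1}, t_n]`,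
`θ^N_{Δt}(·,t) = ((t-t_{n-1})/Δt) θ_n + ((t_n-t)/Δt) θ_{n-1}`. -/
def pwLinear (Δt : ℝ) (θseq : ℕ → ℝ → ℝ) (t z : ℝ) : ℝ :=
  ((t - ((⌈t / Δt⌉₊ : ℝ) - 1) * Δt) / Δt) * θseq ⌈t / Δt⌉₊ z
    + (((⌈t / Δt⌉₊ : ℝ) * Δt - t) / Δt) * θseq (⌈t / Δt⌉₊ - 1) z

/-- The piecewise constant interpolant `θ̃`: `θ̃(·,t) = θ_n` for `t ∈ (t_{n-1}, t_n]`. -/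
def pwConst (Δt : ℝ) (θseq : ℕ → ℝ → ℝ) (t z : ℝ) : ℝ := θseq ⌈t / Δt⌉₊ z

/-- The piecewise constant interpolant `θ̂`: `θ̂(·,t) = θ_{n-1}` for `t ∈ (t_{n-1}, t_n]`. -/
def pwConstHat (Δt : ℝ) (θseq : ℕ → ℝ → ℝ) (t z : ℝ) : ℝ := θseq (⌈t / Δt⌉₊ - 1) z

/-- The (a.e.) time derivative of the piecewise linear interpolant:
`∂_t θ^N_{Δt}(·,t) = (θ_n - θ_{n-1})/Δt` for `t ∈ (t_{n-1}, t_n)`. -/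
def pwDeriv (Δt : ℝ) (θseq : ℕ → ℝ → ℝ) (t z : ℝ) : ℝ :=
  (θseq ⌈t / Δt⌉₊ z - θseq (⌈t / Δt⌉₊ - 1) z) / Δt

/-! The integrand of `L` is the kernel `φ̄_δ`, bounded by `1/δ`, times the average of `K` times
the difference of `H`; on `[-M, M]` the functions `k` and `h` are bounded and Lipschitz, so the
integrand is Lipschitz in the pair of values `(θ z, θ z')`. Integrating in `z'` gives the pointwise
bound `|L(θ₁)(z) - L(θ₂)(z)| ≤ c (2 |θ₁ z - θ₂ z| + ∫ |θ₁ - θ₂|)`. Squaring, the constant term is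
controlled by Jensen's inequality on `(-1, 1)` together with `w ≥ 1`, and integrating against the
integrable weight `w` gives the estimate. -/

lemma abs_mul_sub_mul_le (a₁ a₂ b₁ b₂ : ℝ) :
    |a₁ * b₁ - a₂ * b₂| ≤ |a₁ - a₂| * |b₁| + |a₂| * |b₁ - b₂| := by
  calc |a₁ * b₁ - a₂ * b₂| = |(a₁ - a₂) * b₁ + a₂ * (b₁ - b₂)| := by ring_nf
    _ ≤ |a₁ - a₂| * |b₁| + |a₂| * |b₁ - b₂| := by
      rw [← abs_mul, ← abs_mul]; exact abs_add_le _ _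

lemma LipschitzOnWith.measurable_comp {X α : Type*} [PseudoMetricSpace X] [MeasurableSpace X]
    [OpensMeasurableSpace X] [MeasurableSpace α] {f : X → ℝ} {K : NNReal} {s : Set X}
    (hf : LipschitzOnWith K f s) {θ : α → X} (hθ : Measurable θ) (hθs : ∀ x, θ x ∈ s) :
    Measurable fun x => f (θ x) := by
  obtain ⟨g, hg, hfg⟩ := hf.extend_real
  rw [show (fun x => f (θ x)) = g ∘ θ from funext fun x => hfg (hθs x)]
  exact hg.continuous.measurable.comp hθ

lemma integrableOn_Ioo_of_abs_le {f : ℝ → ℝ} {a b B : ℝ} (hf : Measurable f)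
    (hfB : ∀ x ∈ Ioo a b, |f x| ≤ B) : IntegrableOn f (Ioo a b) :=
  Measure.integrableOn_of_bounded measure_Ioo_lt_top.ne hf.aestronglyMeasurable
    ((ae_restrict_mem measurableSet_Ioo).mono hfB)

lemma sq_setIntegral_le_measureReal_mul {α : Type*} [MeasurableSpace α] {μ : Measure α}
    {s : Set α} (hs : μ s ≠ ⊤) {f : α → ℝ} (hf : IntegrableOn f s μ)
    (hf2 : IntegrableOn (fun x => f x ^ 2) s μ) :
    (∫ x in s, f x ∂μ) ^ 2 ≤ μ.real s * ∫ x in s, f x ^ 2 ∂μ := by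
  rcases eq_or_ne (μ s) 0 with h0 | h0
  · simp [setIntegral_measure_zero _ h0]
  have hpos : 0 < μ.real s := ENNReal.toReal_pos h0 hs
  have hjensen := (even_two.convexOn_pow (𝕜 := ℝ)).map_set_average_le
    (continuous_pow 2).continuousOn isClosed_univ h0 hs (Eventually.of_forall fun x => mem_univ (f x)) hf hf2
  simp only [setAverage_eq, smul_eq_mul, mul_pow] at hjensen
  rw [inv_pow, ← div_eq_inv_mul, ← div_eq_inv_mul, div_le_div_iff₀ (by positivity) hpos] at hjensen
  nlinarith

lemma abs_phiBar_le {δ : ℝ} (hδ0 : 0 < δ) (hδ1 : δ ≤ 1) (t : ℝ) : |phiBar δ t| ≤ 1 / δ := by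
  unfold phiBar phiDelta
  split_ifs with ht
  · rcases eq_or_ne t 0 with rfl | ht0
    · simpa using hδ0.le
    have hnum : 0 ≤ |t| - 1 + δ := by linarith
    have hden : 0 < δ * |t| := mul_pos hδ0 (abs_pos.2 ht0)
    rw [div_div, abs_of_nonneg (div_nonneg hnum hden.le), div_le_div_iff₀ hden hδ0]
    nlinarith
  · simpa using hδ0.le

lemma measurable_phiBar (δ : ℝ) : Measurable (phiBar δ) := by
  unfold phiBar phiDelta
  exact (Measurable.ite (measurableSet_le measurable_const measurable_abs) (by fun_prop)
    measurable_const).div measurable_abs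

lemma chebW_nonneg (z : ℝ) : 0 ≤ chebW z := by unfold chebW; positivity

lemma one_le_chebW {z : ℝ} (hz : z ∈ Ioo (-1 : ℝ) 1) : 1 ≤ chebW z := by
  have hpos : 0 < 1 - z ^ 2 := by nlinarith [hz.1, hz.2]
  unfold chebW
  rw [one_le_inv₀ (Real.sqrt_pos.2 hpos)]
  exact Real.sqrt_le_one.2 (by nlinarith)

lemma integrableOn_chebW : IntegrableOn chebW (Ioo (-1 : ℝ) 1) := by
  have := Polynomial.Chebyshev.intervalIntegrable_sqrt_one_sub_sq_inv
  rw [intervalIntegrable_iff_integrableOn_Ioo_of_le (by norm_num)] at this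
  simp only [Real.sqrt_inv] at this
  exact this

def bondForce (δ : ℝ) (k h : ℝ → ℝ) (z z' s s' : ℝ) : ℝ :=
  phiBar δ (z' - z) * (((k s + k s') / 2) * ((h s' + z') - (h s + z)))

lemma periL_eq_integral_bondForce (δ : ℝ) (k h θ : ℝ → ℝ) (z : ℝ) :
    periL δ k h θ z = ∫ z' in Ioo (-1 : ℝ) 1, bondForce δ k h z z' (θ z) (θ z') := by
  simp only [periL, bondForce, mul_assoc]

section bondForce

variable {δ Kb Hb z z' : ℝ} {k h : ℝ → ℝ} {S : Set ℝ} {Lk Lh : NNReal}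

lemma abs_bondForce_le {s s' : ℝ} (hδ0 : 0 < δ) (hδ1 : δ ≤ 1) (hkS : ∀ s ∈ S, |k s| ≤ Kb)
    (hhS : ∀ s ∈ S, |h s| ≤ Hb) (hz : |z| ≤ 1) (hz' : |z'| ≤ 1) (hs : s ∈ S) (hs' : s' ∈ S) :
    |bondForce δ k h z z' s s'| ≤ 1 / δ * (Kb * (2 * (Hb + 1))) := by
  obtain ⟨hk₁, hk₂⟩ := abs_le.1 (hkS s hs)
  obtain ⟨hk'₁, hk'₂⟩ := abs_le.1 (hkS s' hs')
  obtain ⟨hh₁, hh₂⟩ := abs_le.1 (hhS s hs)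
  obtain ⟨hh'₁, hh'₂⟩ := abs_le.1 (hhS s' hs')
  obtain ⟨hz₁, hz₂⟩ := abs_le.1 hz
  obtain ⟨hz'₁, hz'₂⟩ := abs_le.1 hz'
  have hkavg : |(k s + k s') / 2| ≤ Kb := abs_le.2 ⟨by linarith, by linarith⟩
  have hhsub : |h s' + z' - (h s + z)| ≤ 2 * (Hb + 1) := abs_le.2 ⟨by linarith, by linarith⟩
  rw [bondForce, abs_mul, abs_mul]
  exact mul_le_mul (abs_phiBar_le hδ0 hδ1 _)
    (mul_le_mul hkavg hhsub (abs_nonneg _) ((abs_nonneg _).trans hkavg)) (by positivity)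
    (by positivity)

lemma abs_bondForce_sub_le {s₁ s₂ s₁' s₂' : ℝ} (hδ0 : 0 < δ) (hδ1 : δ ≤ 1)
    (hk : LipschitzOnWith Lk k S) (hh : LipschitzOnWith Lh h S) (hkS : ∀ s ∈ S, |k s| ≤ Kb)
    (hhS : ∀ s ∈ S, |h s| ≤ Hb) (hz : |z| ≤ 1) (hz' : |z'| ≤ 1)
    (hs₁ : s₁ ∈ S) (hs₂ : s₂ ∈ S) (hs₁' : s₁' ∈ S) (hs₂' : s₂' ∈ S) :
    |bondForce δ k h z z' s₁ s₁' - bondForce δ k h z z' s₂ s₂'|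
      ≤ 1 / δ * (Lk * (Hb + 1) + Kb * Lh) * (|s₁ - s₂| + |s₁' - s₂'|) := by
  have lip : ∀ {f : ℝ → ℝ} {L : NNReal}, LipschitzOnWith L f S → ∀ {a b}, a ∈ S → b ∈ S →
      |f a - f b| ≤ L * |a - b| := fun hf _ _ ha hb => by
    simpa only [Real.dist_eq] using hf.dist_le_mul _ ha _ hb
  obtain ⟨hk₁, hk₂⟩ := abs_le.1 (hkS s₂ hs₂)
  obtain ⟨hk'₁, hk'₂⟩ := abs_le.1 (hkS s₂' hs₂')
  obtain ⟨hh₁, hh₂⟩ := abs_le.1 (hhS s₁ hs₁)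
  obtain ⟨hh'₁, hh'₂⟩ := abs_le.1 (hhS s₁' hs₁')
  obtain ⟨hz₁, hz₂⟩ := abs_le.1 hz
  obtain ⟨hz'₁, hz'₂⟩ := abs_le.1 hz'
  have hkavg : |(k s₂ + k s₂') / 2| ≤ Kb := abs_le.2 ⟨by linarith, by linarith⟩
  have hhsub : |h s₁' + z' - (h s₁ + z)| ≤ 2 * (Hb + 1) := abs_le.2 ⟨by linarith, by linarith⟩
  have hkdiff : |(k s₁ + k s₁') / 2 - (k s₂ + k s₂') / 2|
      ≤ Lk / 2 * (|s₁ - s₂| + |s₁' - s₂'|) := by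
    calc _ = |(k s₁ - k s₂) + (k s₁' - k s₂')| / 2 := by
            rw [← abs_two, ← abs_div, abs_two]; ring_nf
      _ ≤ (Lk * |s₁ - s₂| + Lk * |s₁' - s₂'|) / 2 := by
            gcongr; exact (abs_add_le _ _).trans (add_le_add (lip hk hs₁ hs₂) (lip hk hs₁' hs₂'))
      _ = _ := by ring
  have hhdiff : |(h s₁' + z' - (h s₁ + z)) - (h s₂' + z' - (h s₂ + z))|
      ≤ Lh * (|s₁ - s₂| + |s₁' - s₂'|) := by
    calc _ = |(h s₁' - h s₂') - (h s₁ - h s₂)| := by ring_nf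
      _ ≤ Lh * |s₁' - s₂'| + Lh * |s₁ - s₂| :=
            (abs_sub _ _).trans (add_le_add (lip hh hs₁' hs₂') (lip hh hs₁ hs₂))
      _ = _ := by ring
  rw [bondForce, bondForce, ← mul_sub, abs_mul]
  calc _ ≤ 1 / δ * ((Lk / 2 * (|s₁ - s₂| + |s₁' - s₂'|)) * (2 * (Hb + 1))
              + Kb * (Lh * (|s₁ - s₂| + |s₁' - s₂'|))) := by
        refine mul_le_mul (abs_phiBar_le hδ0 hδ1 _) ((abs_mul_sub_mul_le _ _ _ _).trans ?_)
          (abs_nonneg _) (by positivity)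
        exact add_le_add (mul_le_mul hkdiff hhsub (abs_nonneg _) (by positivity))
          (mul_le_mul hkavg hhdiff (abs_nonneg _) ((abs_nonneg _).trans hkavg))
    _ = _ := by ring

lemma integrableOn_bondForce {θ : ℝ → ℝ} (hδ0 : 0 < δ) (hδ1 : δ ≤ 1)
    (hk : LipschitzOnWith Lk k S) (hh : LipschitzOnWith Lh h S)
    (hkS : ∀ s ∈ S, |k s| ≤ Kb) (hhS : ∀ s ∈ S, |h s| ≤ Hb) (hθ : Measurable θ)
    (hθS : ∀ x, θ x ∈ S) (hz : |z| ≤ 1) :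
    IntegrableOn (fun z' => bondForce δ k h z z' (θ z) (θ z')) (Ioo (-1 : ℝ) 1) := by
  have hkθ := hk.measurable_comp hθ hθS
  have hhθ := hh.measurable_comp hθ hθS
  have hmeas : Measurable fun z' => bondForce δ k h z z' (θ z) (θ z') :=
    ((measurable_phiBar δ).comp (measurable_id.sub_const z)).mul
      (((measurable_const.add hkθ).div_const 2).mul ((hhθ.add measurable_id).sub measurable_const))
  refine integrableOn_Ioo_of_abs_le hmeas fun z' hz' =>
    abs_bondForce_le hδ0 hδ1 hkS hhS hz (abs_le.2 ⟨hz'.1.le, hz'.2.le⟩) (hθS z) (hθS z')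

lemma abs_periL_sub_le {θ₁ θ₂ : ℝ → ℝ} (hδ0 : 0 < δ) (hδ1 : δ ≤ 1)
    (hk : LipschitzOnWith Lk k S) (hh : LipschitzOnWith Lh h S)
    (hkS : ∀ s ∈ S, |k s| ≤ Kb) (hhS : ∀ s ∈ S, |h s| ≤ Hb) (hθ₁ : Measurable θ₁)
    (hθ₂ : Measurable θ₂) (hθ₁S : ∀ x, θ₁ x ∈ S) (hθ₂S : ∀ x, θ₂ x ∈ S)
    (hd : IntegrableOn (fun x => θ₁ x - θ₂ x) (Ioo (-1 : ℝ) 1)) (hz : z ∈ Ioo (-1 : ℝ) 1) :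
    |periL δ k h θ₁ z - periL δ k h θ₂ z|
      ≤ 1 / δ * (Lk * (Hb + 1) + Kb * Lh)
        * (2 * |θ₁ z - θ₂ z| + ∫ z' in Ioo (-1 : ℝ) 1, |θ₁ z' - θ₂ z'|) := by
  set c := 1 / δ * (Lk * (Hb + 1) + Kb * Lh)
  have hz1 : |z| ≤ 1 := abs_le.2 ⟨hz.1.le, hz.2.le⟩
  rw [periL_eq_integral_bondForce, periL_eq_integral_bondForce,
    ← integral_sub (integrableOn_bondForce hδ0 hδ1 hk hh hkS hhS hθ₁ hθ₁S hz1)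
      (integrableOn_bondForce hδ0 hδ1 hk hh hkS hhS hθ₂ hθ₂S hz1), ← Real.norm_eq_abs]
  have hconst : IntegrableOn (fun _ => |θ₁ z - θ₂ z|) (Ioo (-1 : ℝ) 1) :=
    integrableOn_const measure_Ioo_lt_top.ne
  have hmajorant : IntegrableOn (fun z' => c * (|θ₁ z - θ₂ z| + |θ₁ z' - θ₂ z'|))
      (Ioo (-1 : ℝ) 1) :=
    (hconst.add hd.abs).const_mul c
  calc _ ≤ ∫ z' in Ioo (-1 : ℝ) 1, c * (|θ₁ z - θ₂ z| + |θ₁ z' - θ₂ z'|) := by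
        refine norm_integral_le_of_norm_le hmajorant ?_
        filter_upwards [ae_restrict_mem measurableSet_Ioo] with z' hz'
        exact abs_bondForce_sub_le hδ0 hδ1 hk hh hkS hhS hz1 (abs_le.2 ⟨hz'.1.le, hz'.2.le⟩)
          (hθ₁S z) (hθ₂S z) (hθ₁S z') (hθ₂S z')
    _ = c * (2 * |θ₁ z - θ₂ z| + ∫ z' in Ioo (-1 : ℝ) 1, |θ₁ z' - θ₂ z'|) := by
        rw [integral_const_mul, integral_add hconst hd.abs,
          setIntegral_const, Real.volume_real_Ioo]
        norm_num

end bondForce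

lemma integral_sq_mul_chebW_le {u v : ℝ → ℝ} {c B : ℝ} (hv : Measurable v)
    (hvB : ∀ z, |v z| ≤ B)
    (huv : ∀ z ∈ Ioo (-1 : ℝ) 1, |u z| ≤ c * (2 * |v z| + ∫ z' in Ioo (-1 : ℝ) 1, |v z'|)) :
    ∫ z in Ioo (-1 : ℝ) 1, u z ^ 2 * chebW z
      ≤ c ^ 2 * (8 + 4 * ∫ z in Ioo (-1 : ℝ) 1, chebW z)
        * ∫ z in Ioo (-1 : ℝ) 1, v z ^ 2 * chebW z := by
  set I := ∫ z' in Ioo (-1 : ℝ) 1, |v z'|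
  set W := ∫ z in Ioo (-1 : ℝ) 1, chebW z
  set S := ∫ z in Ioo (-1 : ℝ) 1, v z ^ 2 * chebW z
  have hW : 0 ≤ W := setIntegral_nonneg measurableSet_Ioo fun z _ => chebW_nonneg z
  have hv2B : ∀ z, |v z ^ 2| ≤ B ^ 2 := fun z => by
    rw [abs_pow]; exact pow_le_pow_left₀ (abs_nonneg _) (hvB z) 2
  have hv2 : IntegrableOn (fun z => v z ^ 2) (Ioo (-1 : ℝ) 1) :=
    integrableOn_Ioo_of_abs_le (hv.pow_const 2) fun z _ => hv2B z
  have hv2w : IntegrableOn (fun z => v z ^ 2 * chebW z) (Ioo (-1 : ℝ) 1) :=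
    integrableOn_chebW.bdd_mul (hv.pow_const 2).aestronglyMeasurable
      (Eventually.of_forall hv2B)
  have hI : I ^ 2 ≤ 2 * S := by
    calc I ^ 2 ≤ volume.real (Ioo (-1 : ℝ) 1) * ∫ z in Ioo (-1 : ℝ) 1, |v z| ^ 2 :=
          sq_setIntegral_le_measureReal_mul measure_Ioo_lt_top.ne
            (integrableOn_Ioo_of_abs_le hv.abs fun z _ => (abs_abs (v z)).trans_le (hvB z))
            (by simpa only [sq_abs] using hv2)
      _ = 2 * ∫ z in Ioo (-1 : ℝ) 1, v z ^ 2 := by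
          simp only [Real.volume_real_Ioo, sq_abs]; norm_num
      _ ≤ 2 * S := by
          gcongr
          refine setIntegral_mono_on hv2 hv2w measurableSet_Ioo fun z hz => ?_
          exact le_mul_of_one_le_right (sq_nonneg _) (one_le_chebW hz)
  calc ∫ z in Ioo (-1 : ℝ) 1, u z ^ 2 * chebW z
      ≤ ∫ z in Ioo (-1 : ℝ) 1, (8 * c ^ 2 * (v z ^ 2 * chebW z) + 2 * c ^ 2 * I ^ 2 * chebW z) := by
        refine integral_mono_of_nonneg
          (Eventually.of_forall fun z => mul_nonneg (sq_nonneg _) (chebW_nonneg z))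
          ((hv2w.const_mul _).add (integrableOn_chebW.const_mul _)) ?_
        filter_upwards [ae_restrict_mem measurableSet_Ioo] with z hz
        have hu2 : u z ^ 2 ≤ (c * (2 * |v z| + I)) ^ 2 := by
          rw [← sq_abs]; exact pow_le_pow_left₀ (abs_nonneg _) (huv z hz) 2
        have hsum : (c * (2 * |v z| + I)) ^ 2 ≤ c ^ 2 * (8 * v z ^ 2 + 2 * I ^ 2) := by
          nlinarith [mul_nonneg (sq_nonneg c) (sq_nonneg (2 * |v z| - I)), sq_abs (v z)]
        have := mul_le_mul_of_nonneg_right (hu2.trans hsum) (chebW_nonneg z)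
        linarith
    _ = 8 * c ^ 2 * S + 2 * c ^ 2 * I ^ 2 * W := by
        rw [integral_add (hv2w.const_mul _) (integrableOn_chebW.const_mul _), integral_const_mul,
          integral_const_mul]
    _ ≤ c ^ 2 * (8 + 4 * W) * S := by
        nlinarith [mul_le_mul_of_nonneg_left hI (mul_nonneg (sq_nonneg c) hW)]

lemma L2wNorm_nonneg (u : ℝ → ℝ) : 0 ≤ L2wNorm u :=
  Real.rpow_nonneg (setIntegral_nonneg measurableSet_Ioo fun z _ =>
    mul_nonneg (sq_nonneg _) (chebW_nonneg z)) _

lemma L2wNorm_le_mul_of_integral_le {u v : ℝ → ℝ} {C : ℝ} (hC : 0 ≤ C)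
    (h : ∫ z in Ioo (-1 : ℝ) 1, u z ^ 2 * chebW z
      ≤ C ^ 2 * ∫ z in Ioo (-1 : ℝ) 1, v z ^ 2 * chebW z) :
    L2wNorm u ≤ C * L2wNorm v := by
  unfold L2wNorm
  rw [← Real.sqrt_eq_rpow, ← Real.sqrt_eq_rpow, ← Real.sqrt_sq hC, ← Real.sqrt_mul (sq_nonneg C)]
  exact Real.sqrt_le_sqrt h

theorem periL_lipschitz_general (δ : ℝ) (hδ : δ ∈ Ioo (0 : ℝ) 1)
    (M : ℝ) (k h : ℝ → ℝ) (Lk Lh : NNReal)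
    (hk : LipschitzOnWith Lk k (Icc (-M) M)) (hh : LipschitzOnWith Lh h (Icc (-M) M)) :
    ∃ C > (0 : ℝ), ∀ θ₁ θ₂ : ℝ → ℝ, Measurable θ₁ → Measurable θ₂ →
      (∀ z, θ₁ z ∈ Icc (-M) M) → (∀ z, θ₂ z ∈ Icc (-M) M) →
      L2wNorm (fun z => periL δ k h θ₁ z - periL δ k h θ₂ z)
        ≤ C * L2wNorm (fun z => θ₁ z - θ₂ z) := by
  obtain ⟨Kb, hKb⟩ := isCompact_Icc.exists_bound_of_continuousOn hk.continuousOn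
  obtain ⟨Hb, hHb⟩ := isCompact_Icc.exists_bound_of_continuousOn hh.continuousOn
  simp only [Real.norm_eq_abs] at hKb hHb
  set c := 1 / δ * (Lk * (Hb + 1) + Kb * Lh)
  set W := ∫ z in Ioo (-1 : ℝ) 1, chebW z
  have hW : 0 ≤ W := setIntegral_nonneg measurableSet_Ioo fun z _ => chebW_nonneg z
  refine ⟨√(c ^ 2 * (8 + 4 * W)) + 1, by positivity, fun θ₁ θ₂ hθ₁ hθ₂ hθ₁M hθ₂M => ?_⟩
  have hdB : ∀ z, |θ₁ z - θ₂ z| ≤ 2 * M := fun z => abs_sub_le_iff.2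
    ⟨by linarith [(hθ₁M z).2, (hθ₂M z).1], by linarith [(hθ₁M z).1, (hθ₂M z).2]⟩
  have hpointwise := fun z (hz : z ∈ Ioo (-1 : ℝ) 1) =>
    abs_periL_sub_le hδ.1 hδ.2.le hk hh hKb hHb hθ₁ hθ₂ hθ₁M hθ₂M
      (integrableOn_Ioo_of_abs_le (hθ₁.sub hθ₂) fun z _ => hdB z) hz
  calc _ ≤ √(c ^ 2 * (8 + 4 * W)) * L2wNorm (fun z => θ₁ z - θ₂ z) := by
        refine L2wNorm_le_mul_of_integral_le (Real.sqrt_nonneg _) ?_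
        rw [Real.sq_sqrt (by positivity)]
        exact integral_sq_mul_chebW_le (hθ₁.sub hθ₂) hdB hpointwise
    _ ≤ _ := mul_le_mul_of_nonneg_right (le_add_of_nonneg_right zero_le_one) (L2wNorm_nonneg _)

/-- Lipschitz continuity of the peridynamic operator on uniformly bounded
sets: if `k, h` are Lipschitz on `[-M,M]`, then there exists `C > 0`, depending only on
`M`, the Lipschitz constants, the sup-bounds of `k, h` on `[-M,M]` and `δ`, such that for
all measurable `θ₁, θ₂ : [-1,1] → [-M,M]`,
`‖L(θ₁) − L(θ₂)‖_{L²_w} ≤ C ‖θ₁ − θ₂‖_{L²_w}`. -/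
theorem periL_lipschitz (δ : ℝ) (hδ : δ ∈ Ioo (0 : ℝ) 1)
    (M : ℝ) (hM : 0 < M) (k h : ℝ → ℝ) (Lk Lh : NNReal)
    (hk : LipschitzOnWith Lk k (Icc (-M) M)) (hh : LipschitzOnWith Lh h (Icc (-M) M)) :
    ∃ C > (0 : ℝ), ∀ θ₁ θ₂ : ℝ → ℝ, Measurable θ₁ → Measurable θ₂ →
      (∀ z, θ₁ z ∈ Icc (-M) M) → (∀ z, θ₂ z ∈ Icc (-M) M) →
      L2wNorm (fun z => periL δ k h θ₁ z - periL δ k h θ₂ z)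
        ≤ C * L2wNorm (fun z => θ₁ z - θ₂ z) :=
  periL_lipschitz_general δ hδ M k h Lk Lh hk hh
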